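/- arXiv:1211.0906 — 5 statements merged into one kernel-verified Lean document; each statement's English description precedes it below -/
import Mathlib

section
/- Let ι and κ be finite index sets, let γ be a type with decidable equality, and consider the input space I = (ι → ℝ) × (κ → γ), whose elements consist of a vector of continuous coordinates together with a vector of categorical coordinates. Let λ : ι → ℝ and μ : κ → ℝ be nonnegative weights. Then the function K_mixed : I × I → ℝ defined by K_mixed((u,s),(w,t)) = exp( ∑_{l ∈ ι} (−λ_l · (u_l − w_l)²) + ∑_{l ∈ κ} (−μ_l · [s_l ≠ t_l]) ), where [s_l ≠ t_l] is 1 if s_l ≠ t_l and 0 otherwise, is a positive definite kernel on I. -/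
/-- A positive definite kernel on a type `X`: symmetric and positive definite. -/
def IsPosDefKernel {X : Type*} (k : X × X → ℝ) : Prop :=
  (∀ x y : X, k (x, y) = k (y, x)) ∧
  ∀ (n : ℕ) (x : Fin n → X) (c : Fin n → ℝ),
    0 ≤ ∑ i, ∑ j, c i * c j * k (x i, x j)

/-- Exponential of a Gram matrix gives a positive semidefinite quadratic form. -/
lemma gram_exp_pd {m : ℕ} {F : Type*} [Fintype F] (φ : F → Fin m → ℝ) (c : Fin m → ℝ) :
    0 ≤ ∑ i, ∑ j, c i * c j * Real.exp (∑ f, φ f i * φ f j) := by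
  classical
  set B : Fin m → Fin m → ℝ := fun i j => ∑ f, φ f i * φ f j with hB
  have hexp : ∀ z : ℝ, Real.exp z = ∑' n : ℕ, z ^ n / (Nat.factorial n : ℝ) := by
    intro z
    rw [Real.exp_eq_exp_ℝ, NormedSpace.exp_eq_tsum_div]
  have hsum : ∀ p : Fin m × Fin m,
      Summable (fun n : ℕ => c p.1 * c p.2 * (B p.1 p.2 ^ n / (Nat.factorial n : ℝ))) := fun p =>
    (Real.summable_pow_div_factorial (B p.1 p.2)).mul_left _
  have key : ∑ i, ∑ j, c i * c j * Real.exp (B i j)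
      = ∑' n : ℕ, ∑ p : Fin m × Fin m, c p.1 * c p.2 * (B p.1 p.2 ^ n / (Nat.factorial n : ℝ)) := by
    rw [← Fintype.sum_prod_type']
    have hterm : ∀ p : Fin m × Fin m, c p.1 * c p.2 * Real.exp (B p.1 p.2)
        = ∑' n : ℕ, c p.1 * c p.2 * (B p.1 p.2 ^ n / (Nat.factorial n : ℝ)) := by
      intro p
      rw [hexp, ← tsum_mul_left]
    rw [Finset.sum_congr rfl fun p _ => hterm p]
    exact (Summable.tsum_finsetSum (fun p _ => hsum p)).symm
  rw [key]
  refine tsum_nonneg fun n => ?_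
  have h1 : ∑ p : Fin m × Fin m, c p.1 * c p.2 * (B p.1 p.2 ^ n / (Nat.factorial n : ℝ))
      = (∑ p : Fin m × Fin m, c p.1 * c p.2 * B p.1 p.2 ^ n) / (Nat.factorial n : ℝ) := by
    rw [Finset.sum_div]
    exact Finset.sum_congr rfl fun p _ => by ring
  rw [h1]
  apply div_nonneg _ (by positivity)
  have h2 : ∑ p : Fin m × Fin m, c p.1 * c p.2 * B p.1 p.2 ^ n
      = ∑ g ∈ Fintype.piFinset (fun _ : Fin n => (Finset.univ : Finset F)),
          (∑ i, c i * ∏ t, φ (g t) i) ^ 2 := by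
    have hpow : ∀ i j : Fin m, B i j ^ n
        = ∑ g ∈ Fintype.piFinset (fun _ : Fin n => (Finset.univ : Finset F)),
            ∏ t, φ (g t) i * φ (g t) j := fun i j =>
      Finset.sum_pow' Finset.univ (fun f => φ f i * φ f j) n
    calc ∑ p : Fin m × Fin m, c p.1 * c p.2 * B p.1 p.2 ^ n
        = ∑ p : Fin m × Fin m, ∑ g ∈ Fintype.piFinset (fun _ : Fin n => (Finset.univ : Finset F)),
            (c p.1 * ∏ t, φ (g t) p.1) * (c p.2 * ∏ t, φ (g t) p.2) := by
          refine Finset.sum_congr rfl fun p _ => ?_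
          rw [hpow, Finset.mul_sum]
          refine Finset.sum_congr rfl fun g _ => ?_
          rw [Finset.prod_mul_distrib]; ring
      _ = ∑ g ∈ Fintype.piFinset (fun _ : Fin n => (Finset.univ : Finset F)),
            ∑ p : Fin m × Fin m, (c p.1 * ∏ t, φ (g t) p.1) * (c p.2 * ∏ t, φ (g t) p.2) :=
          Finset.sum_comm
      _ = _ := by
          refine Finset.sum_congr rfl fun g _ => ?_
          rw [sq, Finset.sum_mul_sum]
          exact Fintype.sum_prod_type' (f := fun a b =>
            (c a * ∏ t, φ (g t) a) * (c b * ∏ t, φ (g t) b))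
  rw [h2]
  exact Finset.sum_nonneg fun g _ => sq_nonneg _

/-- The mixed continuous/categorical kernel `K_mixed` with nonnegative weights is a
positive definite kernel on `(ι → ℝ) × (κ → γ)`. -/
theorem kMixed_isPosDefKernel {ι κ γ : Type*} [Fintype ι] [Fintype κ] [DecidableEq γ]
    (lam : ι → ℝ) (mu : κ → ℝ) (hlam : ∀ l, 0 ≤ lam l) (hmu : ∀ l, 0 ≤ mu l) :
    IsPosDefKernel (fun p : ((ι → ℝ) × (κ → γ)) × ((ι → ℝ) × (κ → γ)) =>
      Real.exp ((∑ l, (-(lam l) * (p.1.1 l - p.2.1 l) ^ 2)) +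
        ∑ l, (-(mu l) * (if p.1.2 l ≠ p.2.2 l then (1 : ℝ) else 0)))) := by
  classical
  constructor
  · intro x y
    simp only
    have e1 : ∑ l, (-(lam l) * (x.1 l - y.1 l) ^ 2) = ∑ l, (-(lam l) * (y.1 l - x.1 l) ^ 2) :=
      Finset.sum_congr rfl fun l _ => by ring
    have e2 : ∑ l, (-(mu l) * (if x.2 l ≠ y.2 l then (1:ℝ) else 0))
        = ∑ l, (-(mu l) * (if y.2 l ≠ x.2 l then (1:ℝ) else 0)) :=
      Finset.sum_congr rfl fun l _ => congrArg (-(mu l) * ·) (if_congr ne_comm rfl rfl)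
    rw [e1, e2]
  · intro m x c
    -- the finite set of all observed categorical values
    set S : Finset γ := Finset.univ.biUnion
      (fun i : Fin m => Finset.univ.image (fun l : κ => (x i).2 l)) with hS
    have hmem : ∀ (i : Fin m) (l : κ), (x i).2 l ∈ S := by
      intro i l
      refine Finset.mem_biUnion.2 ⟨i, Finset.mem_univ _, ?_⟩
      exact Finset.mem_image.2 ⟨l, Finset.mem_univ _, rfl⟩
    -- feature maps
    set F := ι ⊕ (κ × {v // v ∈ S}) with hF
    set φ : F → Fin m → ℝ := fun f i =>
      Sum.elim (fun l => Real.sqrt (2 * lam l) * (x i).1 l)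
        (fun p : κ × {v // v ∈ S} =>
          Real.sqrt (mu p.1) * (if (x i).2 p.1 = p.2.1 then 1 else 0)) f with hφ
    set T : ℝ := ∑ l, mu l with hT
    set q : Fin m → ℝ := fun i => ∑ l, lam l * (x i).1 l ^ 2 with hq
    set d : Fin m → ℝ := fun i => c i * Real.exp (-q i - T / 2) with hd
    -- the Gram sum
    have hGram : ∀ i j : Fin m, ∑ f, φ f i * φ f j
        = (∑ l, 2 * lam l * (x i).1 l * (x j).1 l)
          + ∑ l, mu l * (if (x i).2 l = (x j).2 l then (1:ℝ) else 0) := by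
      intro i j
      rw [Fintype.sum_sum_type]
      congr 1
      · refine Finset.sum_congr rfl fun l _ => ?_
        simp only [hφ, Sum.elim_inl]
        have : Real.sqrt (2 * lam l) * Real.sqrt (2 * lam l) = 2 * lam l :=
          Real.mul_self_sqrt (by have := hlam l; linarith)
        linear_combination ((x i).1 l * (x j).1 l) * this
      · rw [Fintype.sum_prod_type]
        refine Finset.sum_congr rfl fun l _ => ?_
        simp only [hφ, Sum.elim_inr]
        have hsq : Real.sqrt (mu l) * Real.sqrt (mu l) = mu l :=
          Real.mul_self_sqrt (hmu l)
        have : ∑ v : {v // v ∈ S},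
            (Real.sqrt (mu l) * (if (x i).2 l = v.1 then (1:ℝ) else 0)) *
            (Real.sqrt (mu l) * (if (x j).2 l = v.1 then (1:ℝ) else 0))
            = mu l * ∑ v : {v // v ∈ S},
              (if (x i).2 l = v.1 then (1:ℝ) else 0) *
              (if (x j).2 l = v.1 then (1:ℝ) else 0) := by
          rw [Finset.mul_sum]
          refine Finset.sum_congr rfl fun v _ => ?_
          linear_combination ((if (x i).2 l = v.1 then (1:ℝ) else 0) *
            (if (x j).2 l = v.1 then (1:ℝ) else 0)) * hsq
        rw [this]
        congr 1
        have hcoll : ∑ v : {v // v ∈ S},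
            (if (x i).2 l = v.1 then (1:ℝ) else 0) *
            (if (x j).2 l = v.1 then (1:ℝ) else 0)
            = ∑ v ∈ S, (if (x i).2 l = v then (1:ℝ) else 0) *
                (if (x j).2 l = v then (1:ℝ) else 0) :=
          Finset.sum_coe_sort S (fun v => (if (x i).2 l = v then (1:ℝ) else 0) *
            (if (x j).2 l = v then (1:ℝ) else 0))
        rw [hcoll]
        have : ∀ v ∈ S, (if (x i).2 l = v then (1:ℝ) else 0) *
            (if (x j).2 l = v then (1:ℝ) else 0)
            = if v = (x i).2 l then (if (x j).2 l = (x i).2 l then (1:ℝ) else 0) else 0 := by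
          intro v _
          by_cases h1 : (x i).2 l = v
          · subst h1; simp
          · simp [h1, Ne.symm h1]
        rw [Finset.sum_congr rfl this, Finset.sum_ite_eq' S ((x i).2 l)
          (fun _ => if (x j).2 l = (x i).2 l then (1:ℝ) else 0)]
        simp [hmem i l, eq_comm]
    -- the exponent identity
    have hexpo : ∀ i j : Fin m,
        ((∑ l, (-(lam l) * ((x i).1 l - (x j).1 l) ^ 2)) +
          ∑ l, (-(mu l) * (if (x i).2 l ≠ (x j).2 l then (1:ℝ) else 0)))
        = (-q i - T / 2) + (-q j - T / 2) + ∑ f, φ f i * φ f j := by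
      intro i j
      rw [hGram i j]
      have h1 : ∑ l, (-(lam l) * ((x i).1 l - (x j).1 l) ^ 2)
          = ∑ l, (-(lam l * (x i).1 l ^ 2) + -(lam l * (x j).1 l ^ 2)
              + 2 * lam l * (x i).1 l * (x j).1 l) :=
        Finset.sum_congr rfl fun l _ => by ring
      have h2 : ∑ l, (-(mu l) * (if (x i).2 l ≠ (x j).2 l then (1:ℝ) else 0))
          = ∑ l, (-(mu l) + mu l * (if (x i).2 l = (x j).2 l then (1:ℝ) else 0)) := by
        refine Finset.sum_congr rfl fun l _ => ?_
        by_cases h : (x i).2 l = (x j).2 l <;> simp [h]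
      rw [h1, h2, Finset.sum_add_distrib, Finset.sum_add_distrib, Finset.sum_add_distrib]
      simp only [hq, hT, Finset.sum_neg_distrib]
      ring
    -- rewrite each term and conclude
    have hterm : ∀ i j : Fin m,
        c i * c j * Real.exp ((∑ l, (-(lam l) * ((x i).1 l - (x j).1 l) ^ 2)) +
          ∑ l, (-(mu l) * (if (x i).2 l ≠ (x j).2 l then (1:ℝ) else 0)))
        = d i * d j * Real.exp (∑ f, φ f i * φ f j) := by
      intro i j
      rw [hexpo i j, Real.exp_add, Real.exp_add]
      simp only [hd]
      ring
    calc (0:ℝ) ≤ ∑ i, ∑ j, d i * d j * Real.exp (∑ f, φ f i * φ f j) := gram_exp_pd φ d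
      _ = _ := by
          refine Finset.sum_congr rfl fun i _ => Finset.sum_congr rfl fun j _ => ?_
          exact (hterm i j).symm
end

section
/- Let κ be a finite index set, let γ be a type with decidable equality, and let λ : κ → ℝ be nonnegative weights. Then the weighted Hamming distance kernel K_cat : (κ → γ) × (κ → γ) → ℝ defined by K_cat(s, t) = exp( ∑_{l ∈ κ} (−λ_l · [s_l ≠ t_l]) ), where [s_l ≠ t_l] is 1 if s_l ≠ t_l and 0 otherwise, is a positive definite kernel on κ → γ. -/
open Matrix

theorem Matrix.star_dotProduct_mulVec_eq_sum {n : Type*} [Fintype n] (M : Matrix n n ℝ)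
    (c : n → ℝ) : star c ⬝ᵥ (M *ᵥ c) = ∑ i, ∑ j, c i * c j * M i j := by
  simp only [dotProduct, mulVec, Finset.mul_sum, star_trivial]
  exact Fintype.sum_congr _ _ fun i => Fintype.sum_congr _ _ fun j => by ring

theorem Matrix.posSemidef_of_ite_apply_eq {ι Z : Type*} [Fintype ι] [DecidableEq Z]
    (g : ι → Z) :
    (Matrix.of fun i j => if g i = g j then (1 : ℝ) else 0).PosSemidef := by
  let B : Matrix ι (Set.range g) ℝ := Matrix.of fun i z => if g i = z then 1 else 0
  convert posSemidef_self_mul_conjTranspose B using 1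
  ext i j
  rw [of_apply, mul_apply, Fintype.sum_eq_single ⟨g j, j, rfl⟩ fun z hz => ?_]
  · simp [B]
  · have : g j ≠ z := fun h => hz (Subtype.ext h.symm)
    simp [B, this]

section

variable {X : Type*} {k k' : X × X → ℝ}

theorem isPosDefKernel_iff_posSemidef :
    IsPosDefKernel k ↔
      ∀ n (x : Fin n → X), (Matrix.of fun i j => k (x i, x j)).PosSemidef := by
  simp only [posSemidef_iff_dotProduct_mulVec, star_dotProduct_mulVec_eq_sum, of_apply]
  refine ⟨fun ⟨hsymm, hquad⟩ n x => ⟨?_, hquad n x⟩,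
    fun h => ⟨fun x y => ?_, fun n x => (h n x).2⟩⟩
  · ext i j
    exact hsymm _ _
  · simpa using ((h 2 ![x, y]).1.apply 0 1).symm

theorem isPosDefKernel_const {a : ℝ} (ha : 0 ≤ a) : IsPosDefKernel fun _ : X × X => a := by
  refine isPosDefKernel_iff_posSemidef.2 fun n x => ?_
  convert (posSemidef_vecMulVec_self_star (fun _ : Fin n => (1 : ℝ))).smul ha using 1
  ext i j
  simp [vecMulVec]

theorem isPosDefKernel_ite_eq [DecidableEq X] :
    IsPosDefKernel fun p : X × X => if p.1 = p.2 then (1 : ℝ) else 0 :=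
  isPosDefKernel_iff_posSemidef.2 fun _ x => posSemidef_of_ite_apply_eq x

namespace IsPosDefKernel

theorem add (hk : IsPosDefKernel k) (hk' : IsPosDefKernel k') : IsPosDefKernel (k + k') :=
  isPosDefKernel_iff_posSemidef.2 fun n x =>
    (isPosDefKernel_iff_posSemidef.1 hk n x).add (isPosDefKernel_iff_posSemidef.1 hk' n x)

theorem const_smul (hk : IsPosDefKernel k) {a : ℝ} (ha : 0 ≤ a) : IsPosDefKernel (a • k) :=
  isPosDefKernel_iff_posSemidef.2 fun n x => (isPosDefKernel_iff_posSemidef.1 hk n x).smul ha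

theorem mul (hk : IsPosDefKernel k) (hk' : IsPosDefKernel k') : IsPosDefKernel (k * k') :=
  isPosDefKernel_iff_posSemidef.2 fun n x =>
    (isPosDefKernel_iff_posSemidef.1 hk n x).hadamard (isPosDefKernel_iff_posSemidef.1 hk' n x)

theorem prod {ι : Type*} {k : ι → X × X → ℝ} (s : Finset ι)
    (hk : ∀ i ∈ s, IsPosDefKernel (k i)) :
    IsPosDefKernel fun p => ∏ i ∈ s, k i p := by
  classical
  induction s using Finset.induction_on with
  | empty => simpa using isPosDefKernel_const (X := X) zero_le_one
  | insert i s hi ih =>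
    simp only [Finset.prod_insert hi]
    exact (hk i (by simp)).mul (ih fun j hj => hk j (by simp [hj]))

theorem comp {Y : Type*} (hk : IsPosDefKernel k) (f : Y → X) :
    IsPosDefKernel fun p : Y × Y => k (f p.1, f p.2) :=
  ⟨fun _ _ => hk.1 _ _, fun n x => hk.2 n (f ∘ x)⟩

end IsPosDefKernel

theorem isPosDefKernel_exp_neg_mul_ite_ne [DecidableEq X] {r : ℝ} (hr : 0 ≤ r) :
    IsPosDefKernel fun p : X × X => Real.exp (-r * if p.1 ≠ p.2 then 1 else 0) := by
  have h := (isPosDefKernel_const (X := X) (Real.exp_pos (-r)).le).add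
    (isPosDefKernel_ite_eq.const_smul (sub_nonneg.2 (Real.exp_le_one_iff.2 (neg_nonpos.2 hr))))
  convert h using 2 with p
  by_cases hp : p.1 = p.2 <;> simp [hp]

end

/-- The weighted Hamming distance kernel `K_cat` with nonnegative weights is a
positive definite kernel on `κ → γ`. -/
theorem kCat_isPosDefKernel {κ γ : Type*} [Fintype κ] [DecidableEq γ]
    (lam : κ → ℝ) (hlam : ∀ l, 0 ≤ lam l) :
    IsPosDefKernel (fun p : (κ → γ) × (κ → γ) =>
      Real.exp (∑ l, (-(lam l) * (if p.1 l ≠ p.2 l then (1 : ℝ) else 0)))) := by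
  simp only [Real.exp_sum]
  exact IsPosDefKernel.prod _ fun l _ =>
    (isPosDefKernel_exp_neg_mul_ite_ne (hlam l)).comp (Function.eval l)
end

section
/- Let ι be a finite index set and let λ : ι → ℝ be nonnegative weights. Then the weighted squared-exponential kernel K_cont : (ι → ℝ) × (ι → ℝ) → ℝ defined by K_cont(u, w) = exp( ∑_{l ∈ ι} (−λ_l · (u_l − w_l)²) ) is a positive definite kernel on ι → ℝ. -/
open Finset

lemma psd_sum {n : ℕ} {α : Type*} [Fintype α] (d : Fin n → ℝ) (w : α → ℝ)
    (hw : ∀ a, 0 ≤ w a) (p : Fin n → α → ℝ) :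
    0 ≤ ∑ i, ∑ j, d i * d j * ∑ a, w a * (p i a * p j a) := by
  have h : ∀ a : α, w a * (∑ i, d i * p i a) ^ 2
      = ∑ i, ∑ j, d i * d j * (w a * (p i a * p j a)) := by
    intro a
    rw [sq, Finset.sum_mul_sum, Finset.mul_sum]
    exact Finset.sum_congr rfl fun i _ => by
      rw [Finset.mul_sum]
      exact Finset.sum_congr rfl fun j _ => by ring
  calc (0:ℝ) ≤ ∑ a, w a * (∑ i, d i * p i a) ^ 2 :=
        Finset.sum_nonneg fun a _ => mul_nonneg (hw a) (sq_nonneg _)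
    _ = ∑ a, ∑ i, ∑ j, d i * d j * (w a * (p i a * p j a)) :=
        Finset.sum_congr rfl fun a _ => h a
    _ = ∑ i, ∑ a : α, ∑ j, d i * d j * (w a * (p i a * p j a)) := Finset.sum_comm
    _ = ∑ i, ∑ j, ∑ a : α, d i * d j * (w a * (p i a * p j a)) :=
        Finset.sum_congr rfl fun i _ => Finset.sum_comm
    _ = ∑ i, ∑ j, d i * d j * ∑ a, w a * (p i a * p j a) := by
        simp_rw [← Finset.mul_sum]

/-- The weighted squared-exponential kernel `K_cont` with nonnegative weights is a
positive definite kernel on `ι → ℝ`. -/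
theorem kCont_isPosDefKernel {ι : Type*} [Fintype ι]
    (lam : ι → ℝ) (hlam : ∀ l, 0 ≤ lam l) :
    IsPosDefKernel (fun p : (ι → ℝ) × (ι → ℝ) =>
      Real.exp (∑ l, (-(lam l) * (p.1 l - p.2 l) ^ 2))) := by
  constructor
  · intro u w
    simp only
    congr 1
    exact Finset.sum_congr rfl fun l _ => by ring
  · intro n x c
    set t : Fin n → Fin n → ℝ := fun i j => ∑ l, (2 * lam l) * (x i l * x j l) with ht
    set d : Fin n → ℝ := fun i => c i * Real.exp (-∑ l, lam l * x i l ^ 2) with hd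
    have hkey : ∀ i j, c i * c j * Real.exp (∑ l, (-(lam l) * (x i l - x j l) ^ 2))
        = d i * d j * Real.exp (t i j) := by
      intro i j
      have harg : (∑ l, (-(lam l) * (x i l - x j l) ^ 2))
          = (-∑ l, lam l * x i l ^ 2) + ((-∑ l, lam l * x j l ^ 2) + t i j) := by
        rw [ht]
        rw [← Finset.sum_neg_distrib, ← Finset.sum_neg_distrib, ← Finset.sum_add_distrib,
          ← Finset.sum_add_distrib]
        exact Finset.sum_congr rfl fun l _ => by ring
      rw [harg, Real.exp_add, Real.exp_add, hd]
      ring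
    simp only [hkey]
    have hsum1 : ∀ i j : Fin n,
        Summable (fun m : ℕ => d i * d j * (t i j ^ m / m.factorial)) :=
      fun i j => (Real.summable_pow_div_factorial (t i j)).mul_left _
    have hexp : ∀ i j, d i * d j * Real.exp (t i j)
        = ∑' m : ℕ, d i * d j * (t i j ^ m / m.factorial) := by
      intro i j
      rw [Real.exp_eq_exp_ℝ, NormedSpace.exp_eq_tsum_div, tsum_mul_left]
    simp only [hexp]
    have h1 : ∀ i, ∑ j, ∑' m : ℕ, d i * d j * (t i j ^ m / m.factorial)
        = ∑' m : ℕ, ∑ j, d i * d j * (t i j ^ m / m.factorial) :=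
      fun i => (Summable.tsum_finsetSum fun j _ => hsum1 i j).symm
    simp only [h1]
    rw [← Summable.tsum_finsetSum fun i (_ : i ∈ Finset.univ) => summable_sum fun j _ => hsum1 i j]
    refine tsum_nonneg fun m => ?_
    have hpow : ∀ i j, d i * d j * (t i j ^ m / m.factorial)
        = (1 / m.factorial : ℝ) * (d i * d j *
            ∑ f : Fin m → ι, (∏ k, 2 * lam (f k)) *
              ((∏ k, x i (f k)) * (∏ k, x j (f k)))) := by
      intro i j
      have : t i j ^ m = ∑ f : Fin m → ι, (∏ k, 2 * lam (f k)) *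
          ((∏ k, x i (f k)) * (∏ k, x j (f k))) := by
        rw [ht]
        rw [Fintype.sum_pow]
        refine Finset.sum_congr rfl fun f _ => ?_
        rw [← Finset.prod_mul_distrib, ← Finset.prod_mul_distrib]
      rw [this]; ring
    simp only [hpow, ← Finset.mul_sum]
    refine mul_nonneg (by positivity) ?_
    exact psd_sum d (fun f : Fin m → ι => ∏ k, 2 * lam (f k))
      (fun f => Finset.prod_nonneg fun k _ => by have := hlam (f k); linarith)
      (fun i f => ∏ k, x i (f k))
end

section
/- For every real λ ≥ 0, the one-dimensional squared-exponential (Gaussian) kernel k : ℝ × ℝ → ℝ defined by k(x, y) = exp(−λ · (x − y)²) is a positive definite kernel on ℝ. -/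
lemma real_exp_eq_tsum (z : ℝ) : Real.exp z = ∑' m : ℕ, z ^ m / m.factorial := by
  rw [Real.exp_eq_exp_ℝ, NormedSpace.exp_eq_tsum_div]

/-- The one-dimensional squared-exponential (Gaussian) kernel with nonnegative weight
is a positive definite kernel on `ℝ`. -/
theorem gaussianKernel_isPosDefKernel (lam : ℝ) (hlam : 0 ≤ lam) :
    IsPosDefKernel (fun p : ℝ × ℝ => Real.exp (-lam * (p.1 - p.2) ^ 2)) := by
  constructor
  · intro x y
    ring_nf
  · intro n x c
    set a : Fin n → ℝ := fun i => c i * Real.exp (-lam * (x i) ^ 2) with ha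
    set F : ℕ → Fin n → Fin n → ℝ :=
      fun m i j => (2 * lam) ^ m / m.factorial * ((a i * (x i) ^ m) * (a j * (x j) ^ m)) with hF
    have key : ∀ i j, c i * c j * Real.exp (-lam * (x i - x j) ^ 2) = ∑' m : ℕ, F m i j := by
      intro i j
      have h1 : Real.exp (-lam * (x i - x j) ^ 2)
          = Real.exp (-lam * (x i) ^ 2) * Real.exp (-lam * (x j) ^ 2)
            * Real.exp (2 * lam * (x i * x j)) := by
        rw [← Real.exp_add, ← Real.exp_add]
        ring_nf
      rw [h1, show c i * c j *
          (Real.exp (-lam * (x i) ^ 2) * Real.exp (-lam * (x j) ^ 2)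
            * Real.exp (2 * lam * (x i * x j)))
          = a i * a j * Real.exp (2 * lam * (x i * x j)) by simp only [ha]; ring,
        real_exp_eq_tsum (2 * lam * (x i * x j)), ← tsum_mul_left]
      congr 1
      ext m
      rw [hF]
      rw [show (2 * lam * (x i * x j)) ^ m = (2 * lam) ^ m * (x i) ^ m * (x j) ^ m by
        rw [mul_pow, mul_pow]; ring]
      simp only [ha]
      ring
    simp only [key]
    have hsum : ∀ i j : Fin n, Summable (fun m => F m i j) := by
      intro i j
      apply Summable.congr ((Real.summable_pow_div_factorial (2 * lam * (x i * x j))).mul_right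
        (a i * a j))
      intro m
      rw [hF, show (2 * lam * (x i * x j)) ^ m = (2 * lam) ^ m * (x i) ^ m * (x j) ^ m by
        rw [mul_pow, mul_pow]; ring]
      ring
    have hsum2 : ∀ i : Fin n, Summable (fun m => ∑ j, F m i j) := by
      intro i
      exact summable_sum (fun j _ => hsum i j)
    rw [show (∑ i, ∑ j, ∑' m : ℕ, F m i j) = ∑' m : ℕ, ∑ i, ∑ j, F m i j by
      rw [Summable.tsum_finsetSum (fun i _ => hsum2 i)]
      exact Finset.sum_congr rfl fun i _ => (Summable.tsum_finsetSum (fun j _ => hsum i j)).symm]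
    apply tsum_nonneg
    intro m
    have hfac : (0:ℝ) ≤ (2 * lam) ^ m / m.factorial := by positivity
    have heq : ∑ i, ∑ j, F m i j
        = (2 * lam) ^ m / m.factorial * (∑ i, a i * (x i) ^ m) ^ 2 := by
      rw [sq, Finset.sum_mul_sum]
      simp only [hF, Finset.mul_sum]
    rw [heq]
    exact mul_nonneg hfac (sq_nonneg _)
end

section
/- Let X be a real n × p matrix, y ∈ ℝ^n, and ε > 0. Then the ridge regression weight vector w = (Xᵀ X + ε I_p)⁻¹ Xᵀ y minimizes the ε-regularized squared error: for every v ∈ ℝ^p, ‖X w − y‖² + ε · ‖w‖² ≤ ‖X v − y‖² + ε · ‖v‖², where ‖u‖² denotes the sum of the squares of the entries of u. -/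
open Matrix

/-- The ridge regression weight vector `w = (Xᵀ X + ε I_p)⁻¹ Xᵀ y` minimizes the
`ε`-regularized squared error. -/
theorem ridge_weights_minimize (n p : ℕ) (X : Matrix (Fin n) (Fin p) ℝ)
    (y : Fin n → ℝ) (ε : ℝ) (hε : 0 < ε) :
    ∀ v : Fin p → ℝ,
      (∑ i, ((X *ᵥ ((Xᵀ * X + ε • (1 : Matrix (Fin p) (Fin p) ℝ))⁻¹ *ᵥ (Xᵀ *ᵥ y))
          - y) i) ^ 2)
        + ε * ∑ j, ((Xᵀ * X + ε • (1 : Matrix (Fin p) (Fin p) ℝ))⁻¹ *ᵥ (Xᵀ *ᵥ y)) j ^ 2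
      ≤ (∑ i, ((X *ᵥ v - y) i) ^ 2) + ε * ∑ j, (v j) ^ 2 := by
  intro v
  set A : Matrix (Fin p) (Fin p) ℝ := Xᵀ * X + ε • 1 with hA
  set w : Fin p → ℝ := A⁻¹ *ᵥ (Xᵀ *ᵥ y) with hw
  have hAposdef : A.PosDef := by
    have h1 : (Xᵀ * X).PosSemidef := by
      simpa using posSemidef_conjTranspose_mul_self X
    have h2 : (ε • (1 : Matrix (Fin p) (Fin p) ℝ)).PosDef := by
      rw [smul_one_eq_diagonal]; exact posDef_diagonal_iff.mpr fun _ => hε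
    exact Matrix.PosDef.posSemidef_add h1 h2
  have hAw : A *ᵥ w = Xᵀ *ᵥ y := by
    rw [hw, mulVec_mulVec,
      Matrix.mul_nonsing_inv _ ((Matrix.isUnit_iff_isUnit_det _).1 hAposdef.isUnit), one_mulVec]
  clear_value w
  clear hw
  have key : ∀ u : Fin p → ℝ,
      (X *ᵥ u) ⬝ᵥ (X *ᵥ w) + ε * (u ⬝ᵥ w) = (X *ᵥ u) ⬝ᵥ y := by
    intro u
    have h2 : (X *ᵥ u) ⬝ᵥ (X *ᵥ w) = u ⬝ᵥ ((Xᵀ * X) *ᵥ w) := by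
      rw [← mulVec_mulVec, dotProduct_mulVec u, vecMul_transpose]
    calc (X *ᵥ u) ⬝ᵥ (X *ᵥ w) + ε * (u ⬝ᵥ w)
        = u ⬝ᵥ ((Xᵀ * X) *ᵥ w) + u ⬝ᵥ ((ε • (1 : Matrix (Fin p) (Fin p) ℝ)) *ᵥ w) := by
          rw [h2, smul_mulVec, one_mulVec, dotProduct_smul, smul_eq_mul]
      _ = u ⬝ᵥ (A *ᵥ w) := by rw [hA, add_mulVec, dotProduct_add]
      _ = (X *ᵥ u) ⬝ᵥ y := by rw [hAw, dotProduct_mulVec, vecMul_transpose]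
  have sqeq : ∀ (m : ℕ) (u : Fin m → ℝ), ∑ i, u i ^ 2 = u ⬝ᵥ u := by
    intro m u; simp [dotProduct, sq]
  rw [show (∑ i, ((X *ᵥ w - y) i) ^ 2) = (X *ᵥ w - y) ⬝ᵥ (X *ᵥ w - y) from sqeq _ _,
    show (∑ j, w j ^ 2) = w ⬝ᵥ w from sqeq _ _,
    show (∑ i, ((X *ᵥ v - y) i) ^ 2) = (X *ᵥ v - y) ⬝ᵥ (X *ᵥ v - y) from sqeq _ _,
    show (∑ j, v j ^ 2) = v ⬝ᵥ v from sqeq _ _]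
  have e1 : 0 ≤ (X *ᵥ (v - w)) ⬝ᵥ (X *ᵥ (v - w)) + ε * ((v - w) ⬝ᵥ (v - w)) := by
    have h1 : 0 ≤ (X *ᵥ (v - w)) ⬝ᵥ (X *ᵥ (v - w)) :=
      Finset.sum_nonneg (fun i _ => mul_self_nonneg _)
    have h2 : 0 ≤ (v - w) ⬝ᵥ (v - w) :=
      Finset.sum_nonneg (fun j _ => mul_self_nonneg _)
    positivity
  simp only [mulVec_sub, sub_dotProduct, dotProduct_sub] at e1 ⊢
  have c1 := dotProduct_comm (X *ᵥ v) (X *ᵥ w)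
  have c2 := dotProduct_comm v w
  have c3 := dotProduct_comm (X *ᵥ v) y
  have c4 := dotProduct_comm (X *ᵥ w) y
  nlinarith [key v, key w, e1]
end
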